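/- Let λ : K → K* be an isomorphism with λ a (−ε)-symmetric form (λ = −ελ*) on a f.g. free Λ-module K. Set α = λ* and ν = ελ^{−1}, and consider the asymmetric form (M, ρ) with M = K ⊕ K* ⊕ K and ρ = [[0,0,α],[1,0,−ε],[0,1,εα(ν*−εν)α*]], so that εα(ν* − εν)α* = ε λ*(ελ^{−*} − ε·ελ^{−1})λ. Then (M, ρ) ⊕ (K, −λ) is a metabolic asymmetric form: the submodule of M ⊕ K spanned by the columns of the matrix [[ε, 1],[0, −ελ],[1, 0],[−ε, 1]] (a map K ⊕ K → K ⊕ K* ⊕ K ⊕ K) is a lagrangian. -/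

import Mathlib

open Matrix

section aux
variable {R : Type*} {m1 m2 n1 n2 : Type*}

lemma myFromRows_add [Add R] (A C : Matrix m1 n1 R) (B D : Matrix m2 n1 R) :
    Matrix.fromRows A B + Matrix.fromRows C D = Matrix.fromRows (A + C) (B + D) := by
  ext (i | i) k <;> simp

lemma myFromColumns_add [Add R] (A C : Matrix m1 n1 R) (B D : Matrix m1 n2 R) :
    Matrix.fromCols A B + Matrix.fromCols C D = Matrix.fromCols (A + C) (B + D) := by
  ext i (k | k) <;> simp

lemma mySmul_fromRows [SMul ℤ R] (c : ℤ) (A : Matrix m1 n1 R) (B : Matrix m2 n1 R) :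
    c • Matrix.fromRows A B = Matrix.fromRows (c • A) (c • B) := by
  ext (i | i) k <;> simp

lemma mySmul_fromCols [SMul ℤ R] (c : ℤ) (A : Matrix m1 n1 R) (B : Matrix m1 n2 R) :
    c • Matrix.fromCols A B = Matrix.fromCols (c • A) (c • B) := by
  ext i (k | k) <;> simp

end aux

/-- Let `λ : K → K*` be an isomorphism with `λ` a `(−ε)`-symmetric
form (`λ = −ελᵀ`) on `K = ℤⁿ`, `ε = ±1`.  With `α = λᵀ` and `ν = ελ⁻¹`, consider
the asymmetric form `(M, ρ)`, `M = K ⊕ K* ⊕ K`,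
`ρ = [[0,0,α],[1,0,−ε],[0,1,εα(νᵀ−εν)αᵀ]]`.
Then `(M, ρ) ⊕ (K, −λ)` is metabolic: the column span `L` of the block matrix
`[[ε,1],[0,−ελ],[1,0],[−ε,1]]` is a lagrangian, i.e. a direct summand equal to
its own annihilator `L^⊥ = {x : ρ(x)(L) = 0}` for the form `P = ρ ⊕ (−λ)`. -/
theorem stmt_12 (ε : ℤ) (hε : ε = 1 ∨ ε = -1) (n : ℕ)
    (lam li : Matrix (Fin n) (Fin n) ℤ)
    (hskew : lam = -ε • lam.transpose)
    (hli1 : lam * li = 1) (hli2 : li * lam = 1) :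
    ∀ α ν : Matrix (Fin n) (Fin n) ℤ, α = lam.transpose → ν = ε • li →
    ∀ ρ : Matrix (Fin n ⊕ (Fin n ⊕ Fin n)) (Fin n ⊕ (Fin n ⊕ Fin n)) ℤ,
    ρ = Matrix.fromBlocks 0 (Matrix.fromCols 0 α)
          (Matrix.fromRows 1 0)
          (Matrix.fromBlocks 0 (-ε • 1) 1
            (ε • (α * (ν.transpose - ε • ν) * α.transpose))) →
    ∀ P : Matrix ((Fin n ⊕ (Fin n ⊕ Fin n)) ⊕ Fin n)
        ((Fin n ⊕ (Fin n ⊕ Fin n)) ⊕ Fin n) ℤ,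
    P = Matrix.fromBlocks ρ 0 0 (-lam) →
    ∀ j : Matrix ((Fin n ⊕ (Fin n ⊕ Fin n)) ⊕ Fin n) (Fin n ⊕ Fin n) ℤ,
    j = Matrix.fromRows
          (Matrix.fromRows (Matrix.fromCols (ε • 1) 1)
            (Matrix.fromRows (Matrix.fromCols 0 (-ε • lam))
              (Matrix.fromCols 1 0)))
          (Matrix.fromCols (-ε • 1) 1) →
    ∀ L : Submodule ℤ (((Fin n ⊕ (Fin n ⊕ Fin n)) ⊕ Fin n) → ℤ),
    L = LinearMap.range j.mulVecLin →
      (∃ W, IsCompl L W) ∧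
      (∀ x, x ∈ L ↔ ∀ u ∈ L, dotProduct (P.mulVec x) u = 0) := by
  intro α ν hα hν ρ hρ P hP j hj L hL
  subst hα hν hL
  have hε2 : ε * ε = 1 := by rcases hε with rfl | rfl <;> norm_num
  have hlamT : lam.transpose = -ε • lam := by
    conv_lhs => rw [hskew]
    rw [transpose_smul, transpose_transpose]
  have hliT : li.transpose = -ε • li := by
    have h1 : lam.transpose * li.transpose = 1 := by
      rw [← transpose_mul, hli2, transpose_one]
    rw [hlamT, Matrix.smul_mul] at h1
    have h3 : lam * li.transpose = -ε • (1 : Matrix (Fin n) (Fin n) ℤ) := by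
      calc lam * li.transpose = (-ε * -ε) • (lam * li.transpose) := by
            rw [show -ε * -ε = ε * ε by ring, hε2, one_smul]
        _ = -ε • (-ε • (lam * li.transpose)) := (smul_smul _ _ _).symm
        _ = -ε • 1 := by rw [h1]
    calc li.transpose = (li * lam) * li.transpose := by rw [hli2, one_mul]
      _ = li * (lam * li.transpose) := mul_assoc _ _ _
      _ = li * (-ε • 1) := by rw [h3]
      _ = -ε • li := by rw [mul_smul_comm, mul_one]
  have hS : ε • (lam.transpose * ((ε • li).transpose - ε • (ε • li)) * lam.transpose.transpose)
      = lam + lam := by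
    rw [transpose_transpose, transpose_smul, hliT, hlamT]
    rw [smul_smul, smul_smul]
    have h4 : (ε * -ε) • li - (ε * ε) • li = (-2 : ℤ) • li := by
      rw [hε2, show ε * -ε = -(ε*ε) by ring, hε2]
      simp [neg_smul, one_smul, two_smul]
      abel
    rw [h4, Matrix.smul_mul, Matrix.mul_smul, Matrix.smul_mul, smul_smul]
    rw [hli1, Matrix.smul_mul, one_mul, smul_smul]
    rw [show ε * -ε * -2 = 2 * (ε * ε) by ring, hε2, mul_one, two_smul]
  have hP2 : P = Matrix.fromBlocks
      (Matrix.fromBlocks 0 (Matrix.fromCols 0 (-ε • lam))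
        (Matrix.fromRows 1 0)
        (Matrix.fromBlocks 0 (-ε • 1) 1 (lam + lam))) 0 0 (-lam) := by
    rw [hP, hρ, hS, hlamT]
  clear hP hρ
  -- auxiliary matrices
  set q : Matrix (Fin n ⊕ Fin n) ((Fin n ⊕ (Fin n ⊕ Fin n)) ⊕ Fin n) ℤ :=
    fromCols (fromCols 0 (fromCols 0 (fromRows 1 (ε • 1)))) (fromRows 0 1) with hq
  set j' : Matrix ((Fin n ⊕ (Fin n ⊕ Fin n)) ⊕ Fin n) (Fin n ⊕ Fin n) ℤ :=
    fromRows (fromRows (fromCols 1 0) 0) (fromCols 0 1) with hj'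
  set k : Matrix ((Fin n ⊕ Fin n) ⊕ (Fin n ⊕ Fin n)) ((Fin n ⊕ (Fin n ⊕ Fin n)) ⊕ Fin n) ℤ :=
    fromRows
      (fromRows (fromCols (fromCols 0 (fromCols 0 1)) 0)
        (fromCols (fromCols 0 (fromCols (-ε • li) 0)) 0))
      (fromRows (fromCols (fromCols 1 (fromCols (ε • li) (-ε • 1))) 0)
        (fromCols (fromCols 0 (fromCols (ε • li) (ε • 1))) 1)) with hk
  have hqj : q * j = 1 := by
    rw [hq, hj]
    rw [fromCols_mul_fromRows, fromCols_mul_fromRows, fromCols_mul_fromRows,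
      fromRows_mul_fromCols, fromRows_mul_fromCols]
    simp [Matrix.smul_mul, Matrix.fromBlocks_add, ← Matrix.fromBlocks_one]
  have key : j.transpose * (P * j) = 0 := by
    rw [hj, hP2]
    simp only [transpose_fromRows, transpose_fromCols, transpose_smul, transpose_one,
      transpose_zero, transpose_neg, hlamT,
      fromBlocks_mul_fromRows, fromRows_mul_fromCols, fromCols_mul_fromRows,
      fromRows_mul, mul_fromCols, fromCols_mul_fromBlocks,
      Matrix.smul_mul, Matrix.mul_smul, smul_smul, Matrix.add_mul, Matrix.mul_add,
      Matrix.fromBlocks_add, hli1, hli2,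
      Matrix.zero_mul, Matrix.mul_zero, Matrix.one_mul, Matrix.mul_one,
      smul_zero, zero_smul, one_smul, neg_mul, mul_neg, neg_neg, neg_smul, smul_neg,
      add_zero, zero_add, hε2,
      myFromRows_add, myFromColumns_add, mySmul_fromRows, mySmul_fromCols,
      Matrix.fromRows_neg, Matrix.fromCols_neg, neg_zero,
      add_neg_cancel, neg_add_cancel, sub_self]
    rw [show -lam + (lam + lam) + -lam = 0 from by abel]
    simp
  have hFk : fromCols j j' * k = 1 := by
    rw [hj, hj', hk]
    simp only [transpose_fromRows, transpose_fromCols, transpose_smul, transpose_one,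
      transpose_zero, transpose_neg, hlamT,
      fromBlocks_mul_fromRows, fromRows_mul_fromCols, fromCols_mul_fromRows,
      fromRows_mul, mul_fromCols, fromCols_mul_fromBlocks,
      Matrix.smul_mul, Matrix.mul_smul, smul_smul, Matrix.add_mul, Matrix.mul_add,
      Matrix.fromBlocks_add, hli1, hli2,
      Matrix.zero_mul, Matrix.mul_zero, Matrix.one_mul, Matrix.mul_one,
      smul_zero, zero_smul, one_smul, neg_mul, mul_neg, neg_neg, neg_smul, smul_neg,
      add_zero, zero_add, hε2,
      myFromRows_add, myFromColumns_add, mySmul_fromRows, mySmul_fromCols,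
      Matrix.fromRows_neg, Matrix.fromCols_neg, neg_zero,
      add_neg_cancel, neg_add_cancel, sub_self]
    ext ((i | i | i) | i) ((kk | kk | kk) | kk) <;> simp [Matrix.one_apply]
  have hcc : (fromBlocks (ε • li) li (ε • li) 0 : Matrix (Fin n ⊕ Fin n) (Fin n ⊕ Fin n) ℤ)
      * (j.transpose * (P * j')) = 1 := by
    rw [hj, hj', hP2]
    simp only [transpose_fromRows, transpose_fromCols, transpose_smul, transpose_one,
      transpose_zero, transpose_neg, hlamT,
      fromBlocks_mul_fromRows, fromRows_mul_fromCols, fromCols_mul_fromRows,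
      fromRows_mul, mul_fromCols, fromCols_mul_fromBlocks, fromBlocks_multiply,
      Matrix.smul_mul, Matrix.mul_smul, smul_smul, Matrix.add_mul, Matrix.mul_add,
      Matrix.fromBlocks_add, hli1, hli2,
      Matrix.zero_mul, Matrix.mul_zero, Matrix.one_mul, Matrix.mul_one,
      smul_zero, zero_smul, one_smul, neg_mul, mul_neg, neg_neg, neg_smul, smul_neg,
      add_zero, zero_add, hε2,
      myFromRows_add, myFromColumns_add, mySmul_fromRows, mySmul_fromCols,
      Matrix.fromRows_neg, Matrix.fromCols_neg, neg_zero,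
      add_neg_cancel, neg_add_cancel, sub_self]
    ext ((i | i | i) | i) ((kk | kk | kk) | kk) <;> simp [Matrix.one_apply]
  constructor
  · -- direct summand, with complement ker q
    refine ⟨LinearMap.ker q.mulVecLin, ?_, ?_⟩
    · rw [Submodule.disjoint_def]
      rintro x ⟨a, rfl⟩ hker
      rw [LinearMap.mem_ker] at hker
      simp only [mulVecLin_apply] at *
      have ha : a = 0 := by
        have : q *ᵥ (j *ᵥ a) = a := by
          rw [mulVec_mulVec, hqj, one_mulVec]
        rw [hker] at this
        exact this.symm
      rw [ha, mulVec_zero]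
    · rw [codisjoint_iff_le_sup]
      intro x _
      refine Submodule.mem_sup.mpr ⟨j *ᵥ (q *ᵥ x), ⟨q *ᵥ x, by simp⟩,
        x - j *ᵥ (q *ᵥ x), ?_, by abel⟩
      rw [LinearMap.mem_ker]
      simp only [mulVecLin_apply, map_sub, mulVec_mulVec]
      rw [← Matrix.mul_assoc, hqj, Matrix.one_mul, sub_self]
  · intro x
    constructor
    · rintro ⟨a, rfl⟩ u ⟨b, rfl⟩
      simp only [mulVecLin_apply]
      rw [mulVec_mulVec, dotProduct_mulVec, ← mulVec_transpose, mulVec_mulVec, key,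
        zero_mulVec, zero_dotProduct]
    · intro h
      have h0 : j.transpose *ᵥ (P *ᵥ x) = 0 := by
        funext i
        have hi := h (j *ᵥ Pi.single i 1) ⟨Pi.single i 1, by simp⟩
        rw [dotProduct_mulVec, ← mulVec_transpose, dotProduct_single, mul_one] at hi
        exact hi
      set a : (Fin n ⊕ Fin n) → ℤ := (k *ᵥ x) ∘ Sum.inl with ha
      set b : (Fin n ⊕ Fin n) → ℤ := (k *ᵥ x) ∘ Sum.inr with hb
      have hx : x = j *ᵥ a + j' *ᵥ b := by
        have h1 : fromCols j j' *ᵥ (k *ᵥ x) = x := by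
          rw [mulVec_mulVec, hFk, one_mulVec]
        have h2 : k *ᵥ x = Sum.elim a b := by
          funext i; cases i <;> rfl
        rw [h2, fromCols_mulVec_sumElim] at h1
        exact h1.symm
      have hbz : (j.transpose * (P * j')) *ᵥ b = 0 := by
        have h3 : j.transpose *ᵥ (P *ᵥ x)
            = (j.transpose * (P * j)) *ᵥ a + (j.transpose * (P * j')) *ᵥ b := by
          rw [hx, mulVec_add, mulVec_add]
          simp only [mulVec_mulVec]
        rw [key, zero_mulVec, zero_add] at h3
        rw [← h3, h0]
      have hb0 : b = 0 := by
        have h4 : (fromBlocks (ε • li) li (ε • li) 0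
            * (j.transpose * (P * j'))) *ᵥ b = 0 := by
          rw [← mulVec_mulVec, hbz, mulVec_zero]
        rwa [hcc, one_mulVec] at h4
      refine ⟨a, ?_⟩
      rw [mulVecLin_apply, hx, hb0, mulVec_zero, add_zero]
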